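/- Let k ≥ 2 be an integer and let G be a finite simple graph containing no subgraph isomorphic to the complete graph K_{k+1}. Then cw(G) ≥ (k/(k−1)) · δ(G)²/4 − (k−1)/k, where cw(G) is the cutwidth and δ(G) the degeneracy of G. -/

import Mathlib

/-!
Take a vertex set `s` on which every vertex has at least `d = δ(G)` neighbours, and an optimal
ordering. Cut the ordering just after the first `t` vertices `T` of `s`. The edges from `T` to
`s \ T` all cross this cut; there are at least `t d - 2 e(T)` of them, and Turán's theorem bounds
`2 e(T) ≤ (k - 1) t² / k` since `G` has no `K_{k+1}`. Hence `cw(G) ≥ t d - (k - 1) t² / k`, and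
taking for `t` the maximiser `k d / (2 (k - 1))` rounded up loses at most `(k - 1) / k`.
-/

open Finset

variable {V : Type*}

/-- The number of edges crossing position `i` in the linear ordering `f`. -/
def SimpleGraph.cutAt [Fintype V] [DecidableEq V] (G : SimpleGraph V) [DecidableRel G.Adj]
    (f : V ≃ Fin (Fintype.card V)) (i : Fin (Fintype.card V)) : ℕ :=
  (G.edgeFinset.filter (fun e => ∃ u ∈ e, ∃ v ∈ e, f u ≤ i ∧ i < f v)).card

/-- The cutwidth of a finite simple graph. -/
noncomputable def SimpleGraph.cutwidth [Fintype V] [DecidableEq V] (G : SimpleGraph V)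
    [DecidableRel G.Adj] : ℕ :=
  sInf { m | ∃ f : V ≃ Fin (Fintype.card V), m = Finset.univ.sup (fun i => G.cutAt f i) }

/-- The degeneracy of a finite simple graph. -/
noncomputable def SimpleGraph.degeneracy [Fintype V] [DecidableEq V] (G : SimpleGraph V)
    [DecidableRel G.Adj] : ℕ :=
  sSup { k | ∃ s : Finset V, s.Nonempty ∧ ∀ v ∈ s, k ≤ (s.filter (G.Adj v)).card }

/-- Number of edges of the induced subgraph on `s`. -/
def SimpleGraph.inducedEdgeCount [Fintype V] [DecidableEq V] (G : SimpleGraph V)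
    [DecidableRel G.Adj] (s : Finset V) : ℕ :=
  (G.edgeFinset.filter (fun e => ∀ u ∈ e, u ∈ s)).card

/-- `(ρ, λ)`-uniform sparsity. -/
def SimpleGraph.UniformlySparse [Fintype V] [DecidableEq V] (G : SimpleGraph V)
    [DecidableRel G.Adj] (ρ lam : ℝ) : Prop :=
  ∀ s : Finset V, ρ * (Fintype.card V : ℝ) ≤ (s.card : ℝ) →
    (G.inducedEdgeCount s : ℝ) ≤ (s.card : ℝ) * ((s.card : ℝ) - 1) / (2 * lam)

namespace SimpleGraph

theorem CliqueFree.two_mul_mul_card_edgeFinset_le {W : Type*} [Fintype W] {H : SimpleGraph W}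
    [DecidableRel H.Adj] {r : ℕ} (h : H.CliqueFree (r + 1)) :
    2 * r * #H.edgeFinset ≤ (r - 1) * Fintype.card W ^ 2 := by
  rcases r.eq_zero_or_pos with rfl | hr
  · simp
  obtain ⟨M, _, hM⟩ := exists_isTuranMaximal (V := W) hr
  calc 2 * r * #H.edgeFinset ≤ 2 * r * #M.edgeFinset := Nat.mul_le_mul_left _ (hM.2 h)
    _ = 2 * r * #(turanGraph (Fintype.card W) r).edgeFinset := by
      rw [((isTuranMaximal_iff_nonempty_iso_turanGraph hr).mp hM).some.card_edgeFinset_eq]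
    _ ≤ (r - 1) * Fintype.card W ^ 2 := mul_card_edgeFinset_turanGraph_le

section Counting

variable {G : SimpleGraph V} [DecidableRel G.Adj]

theorem sum_card_filter_adj_eq_two_mul_card_edgeFinset_induce (T : Finset V) :
    ∑ u ∈ T, #{w ∈ T | G.Adj u w} = 2 * #(G.induce (T : Set V)).edgeFinset := by
  rw [← sum_degrees_eq_twice_card_edges, ← Finset.sum_coe_sort T]
  refine Fintype.sum_congr _ _ fun u => ?_
  rw [← card_neighborFinset_eq_degree, ← card_map (.subtype _)]
  congr 1
  ext w
  simp [and_comm]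

theorem CliqueFree.mul_sum_card_filter_adj_le {r : ℕ} (h : G.CliqueFree (r + 1))
    (T : Finset V) : r * ∑ u ∈ T, #{w ∈ T | G.Adj u w} ≤ (r - 1) * #T ^ 2 := by
  have hT : (G.induce (T : Set V)).CliqueFree (r + 1) := h.comap (Embedding.induce _).isContained
  have := hT.two_mul_mul_card_edgeFinset_le
  simp only [Finset.coe_sort_coe, Fintype.card_coe] at this
  rw [sum_card_filter_adj_eq_two_mul_card_edgeFinset_induce]
  linarith

end Counting

end SimpleGraph

theorem Finset.exists_subset_card_eq_forall_lt {β : Type*} [LinearOrder β] [DecidableEq V]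
    {f : V → β} {s : Finset V} (hf : Set.InjOn f s) {t : ℕ} (ht : t ≤ #s) :
    ∃ T ⊆ s, #T = t ∧ ∀ u ∈ T, ∀ v ∈ s \ T, f u < f v := by
  induction t with
  | zero => exact ⟨∅, empty_subset _, rfl, by simp⟩
  | succ t ih =>
    obtain ⟨T, hTs, hTc, hlt⟩ := ih (by omega)
    have hne : (s \ T).Nonempty := by
      rw [← card_pos, card_sdiff_of_subset hTs]
      omega
    obtain ⟨m, hm, hmin⟩ := (s \ T).exists_min_image f hne
    rw [mem_sdiff] at hm
    refine ⟨insert m T, insert_subset hm.1 hTs, by rw [card_insert_of_notMem hm.2, hTc], ?_⟩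
    intro u hu v hv
    have hv' : v ∈ s \ T := sdiff_subset_sdiff subset_rfl (subset_insert m T) hv
    rcases mem_insert.1 hu with rfl | hu
    · refine (hmin v hv').lt_of_ne fun hfv => ?_
      rw [← hf hm.1 (mem_sdiff.1 hv).1 hfv] at hv
      exact (mem_sdiff.1 hv).2 (mem_insert_self _ T)
    · exact hlt u hu v hv'

namespace SimpleGraph

variable [Fintype V] [DecidableEq V] (G : SimpleGraph V) [DecidableRel G.Adj]

theorem exists_degeneracy_le_card_filter_adj :
    ∃ s : Finset V, G.degeneracy ≤ #s ∧ ∀ v ∈ s, G.degeneracy ≤ #{w ∈ s | G.Adj v w} := by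
  rcases Nat.eq_zero_or_pos G.degeneracy with h0 | hpos
  · exact ⟨∅, by simp [h0]⟩
  have hne : {k | ∃ s : Finset V, s.Nonempty ∧ ∀ v ∈ s, k ≤ #{w ∈ s | G.Adj v w}}.Nonempty :=
    Set.nonempty_iff_ne_empty.2 fun h => by simp [degeneracy, h] at hpos
  have hbdd : BddAbove {k | ∃ s : Finset V, s.Nonempty ∧ ∀ v ∈ s, k ≤ #{w ∈ s | G.Adj v w}} :=
    ⟨Fintype.card V, fun k ⟨s, ⟨v, hv⟩, hs⟩ =>
      (hs v hv).trans ((card_filter_le _ _).trans (card_le_univ s))⟩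
  obtain ⟨s, ⟨v, hv⟩, hs⟩ := Nat.sSup_mem hne hbdd
  exact ⟨s, (hs v hv).trans (card_filter_le _ _), hs⟩

theorem exists_forall_cutAt_le_cutwidth :
    ∃ f : V ≃ Fin (Fintype.card V), ∀ i, G.cutAt f i ≤ G.cutwidth := by
  obtain ⟨f, hf⟩ : G.cutwidth ∈ {m | ∃ f : V ≃ Fin (Fintype.card V), m = univ.sup (G.cutAt f)} :=
    Nat.sInf_mem ⟨_, Fintype.equivFin V, rfl⟩
  exact ⟨f, fun i => hf ▸ le_sup (mem_univ i)⟩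

theorem sum_card_filter_adj_le_cutAt (f : V ≃ Fin (Fintype.card V)) (i : Fin (Fintype.card V))
    {A B : Finset V} (hA : ∀ u ∈ A, f u ≤ i) (hB : ∀ v ∈ B, i < f v) :
    ∑ u ∈ A, #{v ∈ B | G.Adj u v} ≤ G.cutAt f i := by
  have hpairs : ∑ u ∈ A, #{v ∈ B | G.Adj u v} = #{p ∈ A ×ˢ B | G.Adj p.1 p.2} := by
    rw [card_filter, sum_product]
    simp only [card_filter]
  rw [hpairs, cutAt]
  refine card_le_card_of_injOn (fun p => s(p.1, p.2)) ?_ ?_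
  · rintro ⟨u, v⟩ huv
    simp only [coe_filter, mem_product, Set.mem_ofPred_eq] at huv
    simp only [coe_filter, mem_edgeFinset, mem_edgeSet, Set.mem_ofPred_eq]
    exact ⟨huv.2, u, Sym2.mem_mk_left u v, v, Sym2.mem_mk_right u v, hA u huv.1.1, hB v huv.1.2⟩
  · rintro ⟨u, v⟩ huv ⟨u', v'⟩ huv' heq
    simp only [coe_filter, mem_product, Set.mem_ofPred_eq] at huv huv'
    rcases Sym2.eq_iff.1 heq with ⟨rfl, rfl⟩ | ⟨rfl, -⟩
    · rfl
    · exact absurd ((hA u huv.1.1).trans_lt (hB u huv'.1.2)) (lt_irrefl _)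

variable {G} in
theorem CliqueFree.mul_mul_le_mul_cutwidth_add {k : ℕ} (hcf : G.CliqueFree (k + 1))
    {s : Finset V} {d : ℕ} (hs : ∀ v ∈ s, d ≤ #{w ∈ s | G.Adj v w}) {t : ℕ} (ht : t ≤ #s) :
    k * (t * d) ≤ k * G.cutwidth + (k - 1) * t ^ 2 := by
  obtain ⟨f, hf⟩ := G.exists_forall_cutAt_le_cutwidth
  obtain ⟨T, hTs, rfl, hlt⟩ := s.exists_subset_card_eq_forall_lt f.injective.injOn ht
  rcases T.eq_empty_or_nonempty with rfl | hT
  · simp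
  obtain ⟨w, hwT, hmax⟩ := T.exists_max_image f hT
  have hcut : ∑ u ∈ T, #{v ∈ s \ T | G.Adj u v} ≤ G.cutwidth :=
    (G.sum_card_filter_adj_le_cutAt f (f w) hmax (hlt w hwT)).trans (hf _)
  have hsplit : ∑ u ∈ T, #{v ∈ s | G.Adj u v}
      = ∑ u ∈ T, #{v ∈ s \ T | G.Adj u v} + ∑ u ∈ T, #{v ∈ T | G.Adj u v} := by
    rw [← sum_add_distrib]
    refine sum_congr rfl fun u _ => ?_
    rw [← card_union_of_disjoint (disjoint_filter_filter sdiff_disjoint), ← filter_union,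
      sdiff_union_of_subset hTs]
  have hdeg : #T * d ≤ ∑ u ∈ T, #{v ∈ s | G.Adj u v} :=
    card_nsmul_le_sum _ _ _ fun u hu => hs u (hTs hu)
  have hturan := hcf.mul_sum_card_filter_adj_le T
  calc k * (#T * d) ≤ k * (G.cutwidth + ∑ u ∈ T, #{v ∈ T | G.Adj u v}) := by
        rw [hsplit] at hdeg
        gcongr
        omega
    _ ≤ k * G.cutwidth + (k - 1) * #T ^ 2 := by rw [mul_add]; omega

end SimpleGraph

theorem sq_div_sub_le_mul_sub_mul_sq_of_abs_sub_le_one {a b t : ℝ} (ha : 0 < a)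
    (ht : |t - b / (2 * a)| ≤ 1) : b ^ 2 / (4 * a) - a ≤ b * t - a * t ^ 2 := by
  have hvertex : b * t - a * t ^ 2 = b ^ 2 / (4 * a) - a * (t - b / (2 * a)) ^ 2 := by
    field_simp
    ring
  have hsq : (t - b / (2 * a)) ^ 2 ≤ 1 := (sq_le_one_iff_abs_le_one _).2 ht
  rw [hvertex]
  nlinarith

/-- **Corollary.** For every finite simple graph `G` with no subgraph isomorphic to `K_{k+1}`
(`k ≥ 2`), `cw(G) ≥ (k/(k−1)) δ(G)²/4 − (k−1)/k`. -/
theorem cutwidth_ge_of_cliqueFree [Fintype V] [DecidableEq V]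
    (G : SimpleGraph V) [DecidableRel G.Adj] (k : ℕ) (hk : 2 ≤ k)
    (hcf : G.CliqueFree (k + 1)) :
    (G.cutwidth : ℝ) ≥ (k : ℝ) / ((k : ℝ) - 1) * (G.degeneracy : ℝ) ^ 2 / 4
      - ((k : ℝ) - 1) / (k : ℝ) := by
  obtain ⟨s, hds, hs⟩ := G.exists_degeneracy_le_card_filter_adj
  set d := G.degeneracy
  have hk' : (2 : ℝ) ≤ k := by exact_mod_cast hk
  -- the maximiser of `t ↦ k t d - (k - 1) t²`, rounded up to an integer
  set t := ⌈k * d / (2 * (k - 1) : ℝ)⌉₊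
  have htd : t ≤ d := Nat.ceil_le.2 <| by
    rw [div_le_iff₀ (by linarith)]
    nlinarith [(Nat.cast_nonneg d : (0 : ℝ) ≤ d)]
  have hcut := hcf.mul_mul_le_mul_cutwidth_add hs (htd.trans hds)
  have hcutR : (k : ℝ) * (t * d) ≤ k * G.cutwidth + (k - 1) * t ^ 2 := by
    rw [← Nat.cast_one, ← Nat.cast_sub (by omega)]
    exact_mod_cast hcut
  have hround : |(t : ℝ) - k * d / (2 * (k - 1))| ≤ 1 := by
    have hnonneg : (0 : ℝ) ≤ k * d / (2 * (k - 1)) := div_nonneg (by positivity) (by linarith)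
    rw [abs_sub_le_iff]
    constructor <;> linarith [Nat.le_ceil (k * d / (2 * (k - 1) : ℝ)), Nat.ceil_lt_add_one hnonneg]
  have hquad := sq_div_sub_le_mul_sub_mul_sq_of_abs_sub_le_one (by linarith) hround
  have hk1 : (k : ℝ) - 1 ≠ 0 := by linarith
  rw [ge_iff_le, ← mul_le_mul_iff_of_pos_left (by linarith : (0 : ℝ) < k)]
  calc (k : ℝ) * (k / (k - 1) * d ^ 2 / 4 - (k - 1) / k)
      = (k * d) ^ 2 / (4 * (k - 1)) - (k - 1) := by field_simp
    _ ≤ k * (G.cutwidth : ℝ) := by linarith
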